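/- Let H be a Hopf *-coalgebra (a Hopf algebra that is a *-coalgebra with (hg)* = h*g*, 1* = 1, (S∘*)² = Id), with group-like σ satisfying σ* = σ^{-1} and S_σ² = Id, where S_σ(h) = σS(h). Then the map θ(h^1⊗...⊗h^n) = S_σ(h^1_(1)h^2_(1)···h^n_(1)) ⊗ h^1_(2) ⊗ ... ⊗ h^n_(2) from CC_n(H;σ,ε) to CC_n(H) (the cyclic module of H as an algebra) intertwines the involutions: ω_n ∘ θ = θ ∘ ω_n, where on CC_n(H;σ,ε) the involution is ω_n(h^1⊗...⊗h^n) = S^{-1}((h^n)*_(1))⊗...⊗S^{-1}((h^1)*_(1)) ε((h^1)*_(2)···(h^n)*_(2)) and on CC_n(H) the algebra dihedral involution uses the *-structure *∘S. -/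

import Mathlib

/-! On elementary tensors both sides equal `θ(x¹ ⊗ ⋯ ⊗ xⁿ)` at `xⁱ = S⁻¹((hⁿ⁺¹⁻ⁱ)*)`, where
`θ(x¹ ⊗ ⋯ ⊗ xⁿ) = σ S(x¹₍₁₎ ⋯ xⁿ₍₁₎) ⊗ x¹₍₂₎ ⊗ ⋯ ⊗ xⁿ₍₂₎`.

For `θ ∘ ω` this is the counit axiom `S⁻¹((hⁱ)*₍₁₎) ε((hⁱ)*₍₂₎) = S⁻¹((hⁱ)*)` together with the
multiplicativity of `ε`. For `ω ∘ θ`, the identities `(S a)* = S⁻¹(a*)` (from `(S ∘ *)² = id`) and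
`(S(σ S z))* = σ z*` (from `S_σ² = id` and `σ* = σ⁻¹`) turn the factors of `ω(θ(h))` into
`σ S(S⁻¹((hⁿ₍₁₎)*) ⋯ S⁻¹((h¹₍₁₎)*))` and `S⁻¹((hⁿ⁺¹⁻ⁱ₍₂₎)*)`. These are Sweedler components of
`Δ(S⁻¹((hⁿ⁺¹⁻ⁱ)*))`, because `*` and `S⁻¹` both reverse the coproduct.

To compare expressions written with different Sweedler representations, `θ` is factored through
a map that is multilinear in each slot `H ⊗ H`; it is the ordered product of the slot embeddings
`p ⊗ q ↦ p ⊗ 1 ⊗ ⋯ ⊗ q ⊗ ⋯ ⊗ 1` in the algebra `H^{⊗(n+1)}`. -/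

open TensorProduct PiTensorProduct

lemma List.prod_ofFn_mulSingle {M : Type*} [Monoid M] {n : ℕ} (m : Fin n) (a : M) :
    (List.ofFn (Pi.mulSingle m a)).prod = a := by
  induction n with
  | zero => exact m.elim0
  | succ n ih =>
    rw [List.ofFn_succ, List.prod_cons]
    cases m using Fin.cases with
    | zero => simp [Fin.succ_ne_zero]
    | succ m =>
      rw [Pi.mulSingle_eq_of_ne (Fin.succ_ne_zero m).symm, one_mul]
      convert ih m using 2
      ext i
      simp [Pi.mulSingle_apply]

lemma Fin.neg_succ {n : ℕ} (i : Fin n) : -i.succ = i.rev.succ := by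
  have hi := i.isLt
  ext
  rw [Fin.val_neg', Fin.val_succ, Fin.val_succ, Fin.val_rev, Nat.mod_eq_of_lt (by omega)]
  omega

lemma Fin.cons_comp_neg {α : Type*} {n : ℕ} (x : α) (y : Fin n → α) :
    (fun j => (Fin.cons x y : Fin (n + 1) → α) (-j)) = Fin.cons x (y ∘ Fin.rev) := by
  funext j
  cases j using Fin.cases with
  | zero => simp
  | succ i => simp [Fin.neg_succ]

lemma MultilinearMap.sum_apply_comp_rev {R M N κ : Type*} [CommSemiring R] [AddCommMonoid M]
    [Module R M] [AddCommMonoid N] [Module R N] [Fintype κ] {n : ℕ}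
    (F : MultilinearMap R (fun _ : Fin n => M) N) (g : Fin n → κ → M) :
    ∑ J : Fin n → κ, F (fun i => g i (J i.rev)) = F (fun i => ∑ j, g i j) := by
  classical
  rw [F.map_sum]
  exact Fintype.sum_equiv (Equiv.arrowCongr Fin.revPerm (Equiv.refl κ)) _ _ fun J => by simp

namespace PiTensorProduct

variable {R A : Type*} [CommSemiring R] [Semiring A] [Algebra R A]

variable (R A) in
noncomputable def prodCons (n : ℕ) :
    MultilinearMap R (fun _ : Fin n => A ⊗[R] A) (⨂[R] _ : Fin (n + 1), A) :=
  (MultilinearMap.mkPiAlgebraFin R n (⨂[R] _ : Fin (n + 1), A)).compLinearMap fun i =>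
    LinearMap.mul' R _ ∘ₗ TensorProduct.map (singleAlgHom (A := fun _ => A) 0).toLinearMap
      (singleAlgHom (A := fun _ => A) i.succ).toLinearMap

lemma prodCons_tmul {n : ℕ} (p q : Fin n → A) :
    prodCons R A n (fun i => p i ⊗ₜ q i) = tprod R (Fin.cons (List.ofFn p).prod q) := by
  have hprod : (List.ofFn fun i => Pi.mulSingle 0 (p i) * Pi.mulSingle i.succ (q i)).prod =
      (Fin.cons (List.ofFn p).prod q : Fin (n + 1) → A) := by
    funext j
    rw [Pi.list_prod_apply]
    cases j using Fin.cases with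
    | zero => simp [Function.comp_def]
    | succ j =>
      simp only [List.map_ofFn, Fin.cons_succ]
      refine (congrArg (fun g => (List.ofFn g).prod) ?_).trans (List.prod_ofFn_mulSingle j (q j))
      funext i
      by_cases hij : j = i
      · subst hij; simp
      · simp [hij, Ne.symm hij]
  rw [← hprod, ← tprodMonoidHom_apply, map_list_prod, List.map_ofFn]
  simp [prodCons, Function.comp_def]

end PiTensorProduct

namespace HopfAlgebra

open Coalgebra WithConv LinearMap
open scoped RingTheory.LinearMap

variable {R A : Type*} [CommSemiring R] [Semiring A] [HopfAlgebra R A]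

local notation "𝑺" => antipode R (A := A)

lemma antipode_prod_ofFn_rev {n : ℕ} (x : Fin n → A) :
    𝑺 (List.ofFn fun i => x i.rev).prod = (List.ofFn fun i => 𝑺 (x i)).prod := by
  induction n with
  | zero => simp
  | succ n ih =>
    rw [List.ofFn_succ, List.ofFn_succ', List.prod_cons, List.prod_concat, antipode_mul_antidistrib]
    simp only [Fin.rev_zero, Fin.rev_succ]
    rw [ih (fun i => x i.castSucc)]

lemma map_antipode_comm_comul_convMul_comul :
    toConv (map 𝑺 𝑺 ∘ₗ (TensorProduct.comm R A A).toLinearMap ∘ₗ δ) * toConv δ = 1 := by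
  set X := map 𝑺 𝑺 ∘ₗ (TensorProduct.comm R A A).toLinearMap
  -- In Sweedler notation the product is `x ↦ S x₂ x₃ ⊗ S x₁ x₄`; `Ψ` performs it once the
  -- middle pair has been regrouped as `Δ x₂`, so that the antipode axiom contracts it.
  let Ψ : (A ⊗[R] A) ⊗[R] A →ₗ[R] A ⊗[R] A :=
    lTensor A (mul' R A ∘ₗ rTensor A 𝑺) ∘ₗ (TensorProduct.assoc R A A A).toLinearMap ∘ₗ
      rTensor A (TensorProduct.comm R A A).toLinearMap
  have hcoassoc : (map δ δ ∘ₗ δ : A →ₗ[R] (A ⊗[R] A) ⊗[R] (A ⊗[R] A)) =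
      (TensorProduct.assoc R _ _ _).toLinearMap ∘ₗ
        rTensor A (TensorProduct.assoc R A A A).symm.toLinearMap ∘ₗ
        rTensor A (lTensor A δ) ∘ₗ rTensor A δ ∘ₗ δ := by
    simp only [coassoc_simps]
  have hregroup : mul' R (A ⊗[R] A) ∘ₗ rTensor (A ⊗[R] A) X ∘ₗ
      (TensorProduct.assoc R _ _ _).toLinearMap ∘ₗ
        rTensor A (TensorProduct.assoc R A A A).symm.toLinearMap =
      Ψ ∘ₗ rTensor A (lTensor A (mul' R A ∘ₗ rTensor A 𝑺)) := by
    ext; simp [Ψ, X]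
  have hunit :
      Ψ ∘ₗ rTensor A (lTensor A (Algebra.linearMap R A) ∘ₗ (TensorProduct.mk R A R).flip 1) =
        TensorProduct.mk R A A 1 ∘ₗ mul' R A ∘ₗ rTensor A 𝑺 := by
    ext; simp [Ψ]
  clear_value Ψ
  apply WithConv.ext
  calc mul' R (A ⊗[R] A) ∘ₗ map (X ∘ₗ δ) δ ∘ₗ δ
      = mul' R (A ⊗[R] A) ∘ₗ rTensor _ X ∘ₗ map δ δ ∘ₗ δ := by
        rw [← comp_assoc _ (map δ δ), rTensor, ← TensorProduct.map_comp, id_comp]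
    _ = Ψ ∘ₗ rTensor A (lTensor A (mul' R A ∘ₗ rTensor A 𝑺)) ∘ₗ rTensor A (lTensor A δ) ∘ₗ
          rTensor A δ ∘ₗ δ := by
        rw [hcoassoc]
        simp only [← comp_assoc] at hregroup ⊢
        rw [hregroup]
    _ = Ψ ∘ₗ rTensor A (lTensor A (Algebra.linearMap R A) ∘ₗ lTensor A ε ∘ₗ δ) ∘ₗ δ := by
        rw [← comp_assoc _ _ (rTensor A (lTensor A _)), ← rTensor_comp, ← lTensor_comp, comp_assoc,
          mul_antipode_rTensor_comul, lTensor_comp, ← comp_assoc δ (rTensor A δ), ← rTensor_comp,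
          comp_assoc]
    _ = TensorProduct.mk R A A 1 ∘ₗ mul' R A ∘ₗ rTensor A 𝑺 ∘ₗ δ := by
        rw [lTensor_counit_comp_comul, ← comp_assoc, hunit, comp_assoc, comp_assoc]
    _ = (1 : WithConv (A →ₗ[R] A ⊗[R] A)).ofConv := by
        rw [mul_antipode_rTensor_comul]
        ext; simp [Algebra.algebraMap_eq_smul_one, Algebra.TensorProduct.one_def]

/-- Both sides are convolution inverses of `Δ`, from the right and from the left. -/
theorem comul_comp_antipode :
    δ ∘ₗ 𝑺 = map 𝑺 𝑺 ∘ₗ (TensorProduct.comm R A A).toLinearMap ∘ₗ δ :=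
  congrArg ofConv (left_inv_eq_right_inv map_antipode_comm_comul_convMul_comul comul_right_inv).symm

theorem comul_apply_of_antipode_inverse (T : A →ₗ[R] A) (hT : Function.LeftInverse T 𝑺)
    (hT' : Function.RightInverse T 𝑺) (a : A) :
    δ (T a) = map T T (TensorProduct.comm R A A (δ a)) := by
  have hcancel (z : A ⊗[R] A) :
      map T T (TensorProduct.comm R A A (map 𝑺 𝑺 (TensorProduct.comm R A A z))) = z := by
    induction z using TensorProduct.induction_on <;> simp_all [hT _]
  have hS : δ (𝑺 (T a)) = map 𝑺 𝑺 (TensorProduct.comm R A A (δ (T a))) :=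
    LinearMap.congr_fun comul_comp_antipode (T a)
  rw [← hcancel (δ (T a)), ← hS, hT' a]

end HopfAlgebra

namespace Coalgebra

variable {K A : Type*} [Field K] [Ring A] [Algebra K A] [Coalgebra K A] [Nontrivial A]

lemma counit_one_of_comul_one (h : comul (R := K) (1 : A) = 1) : counit (R := K) (1 : A) = 1 := by
  apply (algebraMap K A).injective
  simpa [h, Algebra.TensorProduct.one_def, Algebra.algebraMap_eq_smul_one] using
    congrArg (TensorProduct.lid K A) (rTensor_counit_comul (R := K) (1 : A))

lemma counit_mul_of_antipode (S : A →ₗ[K] A)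
    (hcomul_mul : ∀ a b : A, comul (R := K) (a * b) = comul a * comul b)
    (hS : ∀ a : A, LinearMap.mul' K A (S.rTensor A (comul a)) = algebraMap K A (counit a))
    (hSanti : ∀ a b : A, S (a * b) = S b * S a) (a b : A) :
    counit (R := K) (a * b) = counit a * counit b := by
  apply (algebraMap K A).injective
  have hSa : ∑ i ∈ (ℛ K a).index, S ((ℛ K a).left i) * (ℛ K a).right i =
      algebraMap K A (counit a) := by
    simpa [← (ℛ K a).eq, map_sum] using hS a
  have hSb : ∑ j ∈ (ℛ K b).index, S ((ℛ K b).left j) * (ℛ K b).right j =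
      algebraMap K A (counit b) := by
    simpa [← (ℛ K b).eq, map_sum] using hS b
  calc algebraMap K A (counit (a * b))
      = ∑ j ∈ (ℛ K b).index, S ((ℛ K b).left j) *
          (∑ i ∈ (ℛ K a).index, S ((ℛ K a).left i) * (ℛ K a).right i) * (ℛ K b).right j := by
        rw [← hS, hcomul_mul, ← (ℛ K a).eq, ← (ℛ K b).eq, Finset.sum_mul_sum, Finset.sum_comm]
        simp [Finset.mul_sum, Finset.sum_mul, hSanti, mul_assoc]
    _ = algebraMap K A (counit a * counit b) := by
        simp_rw [hSa, ← Algebra.commutes, mul_assoc, ← Finset.mul_sum, hSb, map_mul]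

end Coalgebra

/-- Multiplicativity of the counit is recovered from the antipode, which needs `A` nontrivial. -/
abbrev HopfAlgebra.ofAxioms {K A : Type*} [Field K] [Ring A] [Algebra K A] [Nontrivial A]
    (comul : A →ₗ[K] A ⊗[K] A) (counit : A →ₗ[K] K) (S : A →ₗ[K] A)
    (hcoassoc : ∀ a : A,
      TensorProduct.assoc K A A A (map comul LinearMap.id (comul a)) =
        map LinearMap.id comul (comul a))
    (hcounit_left : ∀ a : A, TensorProduct.lid K A (map counit LinearMap.id (comul a)) = a)
    (hcounit_right : ∀ a : A, TensorProduct.rid K A (map LinearMap.id counit (comul a)) = a)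
    (hcomul_mul : ∀ a b : A, comul (a * b) = comul a * comul b) (hcomul_one : comul 1 = 1)
    (hantipode_left : ∀ a : A,
      LinearMap.mul' K A (map S LinearMap.id (comul a)) = algebraMap K A (counit a))
    (hantipode_right : ∀ a : A,
      LinearMap.mul' K A (map LinearMap.id S (comul a)) = algebraMap K A (counit a))
    (hSanti : ∀ a b : A, S (a * b) = S b * S a) : HopfAlgebra K A :=
  letI : Coalgebra K A :=
    { comul, counit
      coassoc := LinearMap.ext hcoassoc
      rTensor_counit_comp_comul := LinearMap.ext fun a =>
        (TensorProduct.lid K A).injective ((hcounit_left a).trans (by simp))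
      lTensor_counit_comp_comul := LinearMap.ext fun a =>
        (TensorProduct.rid K A).injective ((hcounit_right a).trans (by simp)) }
  letI : Bialgebra K A := Bialgebra.mk' K A (Coalgebra.counit_one_of_comul_one hcomul_one)
    (Coalgebra.counit_mul_of_antipode S hcomul_mul hantipode_left hSanti _ _) hcomul_one
    (hcomul_mul _ _)
  { antipode := S
    mul_antipode_rTensor_comul := LinearMap.ext hantipode_left
    mul_antipode_lTensor_comul := LinearMap.ext hantipode_right }

namespace HopfAlgebra

open Coalgebra LinearMap
open scoped RingTheory.LinearMap

variable {R A : Type*} [CommSemiring R] [Semiring A] [HopfAlgebra R A]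

local notation "𝑺" => antipode R (A := A)

variable (σ : A) (n : ℕ)

/-- The paper's `θ`, with `S_σ = σ S`. -/
noncomputable def theta : MultilinearMap R (fun _ : Fin n => A) (⨂[R] _ : Fin (n + 1), A) :=
  ((PiTensorProduct.map (Fin.cons (mulLeft R σ ∘ₗ 𝑺) fun _ => LinearMap.id)).compMultilinearMap
    (prodCons R A n)).compLinearMap fun _ => δ

variable {σ n}

theorem theta_apply_of_comul_eq {ι : Type*} [Fintype ι] (h : Fin n → A) (u v : Fin n → ι → A)
    (hrep : ∀ i, δ (h i) = ∑ j, u i j ⊗ₜ[R] v i j) :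
    theta σ n h = ∑ J : Fin n → ι,
      PiTensorProduct.tprod R
        (Fin.cons (σ * 𝑺 (List.ofFn fun i => u i (J i)).prod) fun i => v i (J i)) := by
  classical
  simp only [theta, MultilinearMap.compLinearMap_apply, hrep, MultilinearMap.map_sum,
    LinearMap.compMultilinearMap_apply, prodCons_tmul, map_tprod]
  refine Finset.sum_congr rfl fun J _ => congrArg (PiTensorProduct.tprod R) (funext fun j => ?_)
  cases j using Fin.cases <;> rfl

/-- The left side is `θ (ω h)` when `∑ j, y i j ⊗ x i j = (S⁻¹ ⊗ id) (Δ (hⁱ)*)`. -/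
theorem sum_counit_smul_tprod_eq_theta {ι : Type*} [Fintype ι] (x y : Fin n → ι → A)
    (P Q : Fin n → ι → ι → A) (hrep : ∀ i j, δ (y i j) = ∑ l, P i j l ⊗ₜ[R] Q i j l) :
    ∑ J : Fin n → ι, ∑ L : Fin n → ι, counit (R := R) (List.ofFn fun i => x i (J i)).prod •
      PiTensorProduct.tprod R (Fin.cons (σ * 𝑺 (List.ofFn fun i => P i.rev (J i.rev) (L i)).prod)
        fun i => Q i.rev (J i.rev) (L i)) =
    theta σ n (fun i => ∑ j, counit (R := R) (x i.rev j) • y i.rev j) := by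
  rw [← (theta σ n).sum_apply_comp_rev]
  refine Finset.sum_congr rfl fun J _ => ?_
  have hcounit : counit (R := R) (List.ofFn fun i => x i (J i)).prod =
      ∏ i : Fin n, counit (R := R) (x i.rev (J i.rev)) := by
    rw [← Bialgebra.counitAlgHom_apply, map_list_prod, List.map_ofFn, List.prod_ofFn]
    exact Fintype.prod_equiv Fin.revPerm _ _ fun i => by simp
  rw [MultilinearMap.map_smul_univ, ← hcounit,
    theta_apply_of_comul_eq _ _ _ fun i => hrep i.rev (J i.rev), Finset.smul_sum]

/-- The left side is `ω (θ h)` for the dihedral involution built from `a ↦ τ (S a)`. -/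
theorem sum_tprod_comp_neg_eq_theta {ι : Type*} [Fintype ι] (τ : A →* A) (T : A →ₗ[R] A)
    (hT : Function.LeftInverse T 𝑺) (hT' : Function.RightInverse T 𝑺)
    (hτS : ∀ a, τ (𝑺 a) = T (τ a)) (hτσ : ∀ a, τ (𝑺 (σ * 𝑺 a)) = σ * τ a)
    (hτδ : ∀ (x : A) (u v : ι → A), δ x = ∑ j, u j ⊗ₜ[R] v j →
      δ (τ x) = ∑ j, τ (v j) ⊗ₜ[R] τ (u j))
    (h : Fin n → A) (u v : Fin n → ι → A) (hrep : ∀ i, δ (h i) = ∑ j, u i j ⊗ₜ[R] v i j) :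
    ∑ J : Fin n → ι, PiTensorProduct.tprod R (fun j => τ (𝑺 ((Fin.cons
      (σ * 𝑺 (List.ofFn fun i => u i (J i)).prod) fun i => v i (J i) : Fin (n + 1) → A) (-j)))) =
    theta σ n (fun i => T (τ (h i.rev))) := by
  have hrep' (i : Fin n) :
      δ (T (τ (h i.rev))) = ∑ j, T (τ (u i.rev j)) ⊗ₜ[R] T (τ (v i.rev j)) := by
    rw [comul_apply_of_antipode_inverse T hT hT', hτδ _ _ _ (hrep i.rev)]
    simp
  rw [theta_apply_of_comul_eq _ _ _ hrep']
  refine Fintype.sum_equiv (Equiv.arrowCongr Fin.revPerm (Equiv.refl ι)) _ _ fun J => ?_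
  rw [show (fun j => τ (𝑺 _)) = (fun a => τ (𝑺 a)) ∘ _ from rfl, Fin.cons_comp_neg, Fin.comp_cons]
  simp only [Equiv.arrowCongr_apply, Equiv.refl_apply, Function.comp_apply, Fin.revPerm_symm,
    Fin.revPerm_apply]
  congr 2
  · rw [hτσ, map_list_prod, antipode_prod_ofFn_rev fun i => T (τ (u i (J i)))]
    simp [show ∀ a, 𝑺 (T a) = a from hT', List.map_ofFn, Function.comp_def]
  · funext i
    simp [hτS]

end HopfAlgebra

variable {k H : Type*}

theorem theta_intertwines_involutions
    [Field k]
    [Ring H] [Algebra k H]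
    (comul : H →ₗ[k] H ⊗[k] H) (counit : H →ₗ[k] k) (S Sinv : H →ₗ[k] H)
    (st : H → H) (σ σi : H)
    -- Hopf algebra axioms:
    (hcoassoc : ∀ h : H,
      (TensorProduct.assoc k H H H) ((TensorProduct.map comul LinearMap.id) (comul h)) =
        (TensorProduct.map LinearMap.id comul) (comul h))
    (hcounit_left : ∀ h : H,
      (TensorProduct.lid k H) ((TensorProduct.map counit LinearMap.id) (comul h)) = h)
    (hcounit_right : ∀ h : H,
      (TensorProduct.rid k H) ((TensorProduct.map LinearMap.id counit) (comul h)) = h)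
    (hcomul_mul : ∀ a b : H, comul (a * b) = comul a * comul b) (hcomul_one : comul 1 = 1)
    (hantipode_left : ∀ h : H,
      (LinearMap.mul' k H) ((TensorProduct.map S LinearMap.id) (comul h)) =
        algebraMap k H (counit h))
    (hantipode_right : ∀ h : H,
      (LinearMap.mul' k H) ((TensorProduct.map LinearMap.id S) (comul h)) =
        algebraMap k H (counit h))
    (hSanti : ∀ a b : H, S (a * b) = S b * S a)
    (hSinvS : ∀ h, Sinv (S h) = h) (hSSinv : ∀ h, S (Sinv h) = h)
    -- the *-coalgebra structure: * is a multiplicative, conjugate-linear involution of the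
    -- coalgebra (Δ(h*) = h_(2)* ⊗ h_(1)* is imposed representation-wise below):
    (hst_mul : ∀ a b : H, st (a * b) = st a * st b) (hst_one : st 1 = 1)
    (hst_inv : ∀ a : H, st (st a) = a)
    (hSst2 : ∀ a : H, S (st (S (st a))) = a)
    -- σ is group-like with σ* = σ⁻¹ and S_σ² = Id:
    (hσ' : σi * σ = 1) (hstσ : st σ = σi)
    (hSσ2 : ∀ h : H, σ * S (σ * S h) = h)
    (ι : Type) (_ : Fintype ι)
    -- the *-coalgebra axiom Δ(x*) = x_(2)* ⊗ x_(1)*, representation-wise: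
    (hΔst : ∀ (x : H) (u v : ι → H), comul x = ∑ j : ι, u j ⊗ₜ[k] v j →
      comul (st x) = ∑ j : ι, st (v j) ⊗ₜ[k] st (u j))
    -- the data: an elementary tensor h^1 ⊗ ... ⊗ h^n with Sweedler representations of the
    -- coproducts and of the iterated coproducts appearing in θ ∘ ω:
    (n : ℕ) (h : Fin n → H) (u v : Fin n → ι → H)
    (hrep : ∀ i, comul (h i) = ∑ j : ι, u i j ⊗ₜ[k] v i j)
    (A B : Fin n → ι → ι → H)
    (hrep2 : ∀ (i : Fin n) (j : ι),
      comul (Sinv (st (v i j))) = ∑ l : ι, A i j l ⊗ₜ[k] B i j l) :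
    -- ω_n (θ (h^1⊗...⊗h^n)) = θ (ω_n (h^1⊗...⊗h^n)) in H^⊗(n+1):
    (∑ J : Fin n → ι,
      tprod k (fun j : Fin (n + 1) =>
        st (S ((Fin.cons (σ * S ((List.ofFn fun i => u i (J i)).prod))
          (fun i => v i (J i)) : Fin (n + 1) → H) (-j))))) =
    (∑ J : Fin n → ι, ∑ L : Fin n → ι,
      (counit ((List.ofFn fun i => st (u i (J i))).prod)) •
        tprod k (Fin.cons
          (σ * S ((List.ofFn fun i => A (Fin.rev i) (J (Fin.rev i)) (L i)).prod))
          (fun i => B (Fin.rev i) (J (Fin.rev i)) (L i)) : Fin (n + 1) → H)) := by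
  rcases subsingleton_or_nontrivial H with _ | _
  · have hzero (g : Fin (n + 1) → H) : PiTensorProduct.tprod k g = 0 :=
      (PiTensorProduct.tprod k).map_coord_zero 0 (Subsingleton.elim _ _)
    simp [hzero]
  let _ : HopfAlgebra k H := .ofAxioms comul counit S hcoassoc hcounit_left hcounit_right
    hcomul_mul hcomul_one hantipode_left hantipode_right hSanti
  let τ : H →* H := ⟨⟨st, hst_one⟩, hst_mul⟩
  have hstS (a : H) : st (S a) = Sinv (st a) := by
    simpa only [hst_inv, hSinvS] using congrArg Sinv (hSst2 (st a))
  have hstSσ (a : H) : st (S (σ * S a)) = σ * st a := by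
    have hSσ : S (σ * S a) = σi * a := by
      calc S (σ * S a) = σi * (σ * S (σ * S a)) := by rw [← mul_assoc, hσ', one_mul]
        _ = σi * a := by rw [hSσ2]
    rw [hSσ, hst_mul, ← hstσ, hst_inv]
  have hSinv_st (i : Fin n) : ∑ j, counit (st (u i j)) • Sinv (st (v i j)) = Sinv (st (h i)) := by
    have := hcounit_right (st (h i))
    rw [hΔst _ _ _ (hrep i)] at this
    simpa [map_sum] using congrArg Sinv this
  refine (HopfAlgebra.sum_tprod_comp_neg_eq_theta τ Sinv hSinvS hSSinv hstS hstSσ hΔst h u v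
    hrep).trans (Eq.trans ?_ (HopfAlgebra.sum_counit_smul_tprod_eq_theta
      (fun i j => st (u i j)) (fun i j => Sinv (st (v i j))) A B hrep2).symm)
  exact congrArg _ (funext fun i => (hSinv_st i.rev).symm)
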